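/- Let φ be a conformal immersion on an open set U ⊆ ℝ² with conformal factor λ, with unit normal n := (φ_u × φ_v)/‖φ_u × φ_v‖, mean curvature H := ⟨Δφ, n⟩/(2λ²), and μ := (∂_z φ_z, n). Then the Weingarten (third structure) equation holds at every point of U: ∂_z n = −H φ_z − (2μ/λ²) φ_z̄. -/

import Mathlib

open Complex

noncomputable section

/-- Euclidean 3-space. -/
abbrev E3 : Type := EuclideanSpace ℝ (Fin 3)

/-- Partial derivative in the first (u) coordinate direction. -/
def pu {F : Type} [NormedAddCommGroup F] [NormedSpace ℝ F]
    (f : ℝ × ℝ → F) (p : ℝ × ℝ) : F := fderiv ℝ f p (1, 0)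

/-- Partial derivative in the second (v) coordinate direction. -/
def pv {F : Type} [NormedAddCommGroup F] [NormedSpace ℝ F]
    (f : ℝ × ℝ → F) (p : ℝ × ℝ) : F := fderiv ℝ f p (0, 1)

/-- Cross product on ℝ³. -/
def cross (a b : E3) : E3 :=
  (WithLp.equiv 2 (Fin 3 → ℝ)).symm
    ![a 1 * b 2 - a 2 * b 1, a 2 * b 0 - a 0 * b 2, a 0 * b 1 - a 1 * b 0]

/-- The Euclidean inner product on ℝ³. -/
def ip (a b : E3) : ℝ := @inner ℝ _ _ a b

/-- `φ` is a smooth conformal immersion on the open set `U ⊆ ℝ²` with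
(smooth, positive) conformal factor `lam`:  ⟨φ_u,φ_u⟩ = λ², ⟨φ_v,φ_v⟩ = λ²,
⟨φ_u,φ_v⟩ = 0 at every point of `U`. -/
def IsConfImm (U : Set (ℝ × ℝ)) (φ : ℝ × ℝ → E3) (lam : ℝ × ℝ → ℝ) : Prop :=
  IsOpen U ∧ ContDiffOn ℝ (⊤ : ℕ∞) φ U ∧ ContDiffOn ℝ (⊤ : ℕ∞) lam U ∧
    ∀ p ∈ U, 0 < lam p ∧
      ip (pu φ p) (pu φ p) = (lam p) ^ 2 ∧
      ip (pv φ p) (pv φ p) = (lam p) ^ 2 ∧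
      ip (pu φ p) (pv φ p) = 0

/-- Complexification ℝ³ ↪ ℂ³. -/
def toC (x : E3) : Fin 3 → ℂ := fun j => (x j : ℂ)

/-- Complex-bilinear dot product on ℂ³:  (a,b) = Σⱼ aⱼ bⱼ. -/
def cdot (a b : Fin 3 → ℂ) : ℂ := ∑ j, a j * b j

/-- ∂_z = ½(∂_u − i ∂_v) for maps into complex normed spaces. -/
def dz {F : Type} [NormedAddCommGroup F] [NormedSpace ℂ F]
    (f : ℝ × ℝ → F) (p : ℝ × ℝ) : F :=
  (2 : ℂ)⁻¹ • (pu f p - Complex.I • pv f p)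

/-- ∂_z̄ = ½(∂_u + i ∂_v) for maps into complex normed spaces. -/
def dzbar {F : Type} [NormedAddCommGroup F] [NormedSpace ℂ F]
    (f : ℝ × ℝ → F) (p : ℝ × ℝ) : F :=
  (2 : ℂ)⁻¹ • (pu f p + Complex.I • pv f p)

/-- `f_z := ½(f_u − i f_v) ∈ ℂ³` for a real-vector-valued map `f` (in particular `φ_z`). -/
def phiz (f : ℝ × ℝ → E3) (p : ℝ × ℝ) : Fin 3 → ℂ :=
  (2 : ℂ)⁻¹ • (toC (pu f p) - Complex.I • toC (pv f p))

/-- `f_z̄ := ½(f_u + i f_v) ∈ ℂ³` for a real-vector-valued map `f` (in particular `φ_z̄`). -/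
def phizbar (f : ℝ × ℝ → E3) (p : ℝ × ℝ) : Fin 3 → ℂ :=
  (2 : ℂ)⁻¹ • (toC (pu f p) + Complex.I • toC (pv f p))

/-- The unit normal n = (φ_u × φ_v)/‖φ_u × φ_v‖. -/
def nvec (φ : ℝ × ℝ → E3) (p : ℝ × ℝ) : E3 :=
  ‖cross (pu φ p) (pv φ p)‖⁻¹ • cross (pu φ p) (pv φ p)

/-- Componentwise Laplacian Δ = ∂_uu + ∂_vv. -/
def lap {F : Type} [NormedAddCommGroup F] [NormedSpace ℝ F]
    (f : ℝ × ℝ → F) (p : ℝ × ℝ) : F := pu (pu f) p + pv (pv f) p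

/-- Mean curvature H = ⟨Δφ, n⟩/(2λ²). -/
def mcurv (φ : ℝ × ℝ → E3) (lam : ℝ × ℝ → ℝ) (p : ℝ × ℝ) : ℝ :=
  ip (lap φ p) (nvec φ p) / (2 * (lam p) ^ 2)

/-- μ := (∂_z φ_z, n). -/
def muQ (φ : ℝ × ℝ → E3) (p : ℝ × ℝ) : ℂ :=
  cdot (dz (phiz φ) p) (toC (nvec φ p))

/-! Differentiating `⟨n, n⟩ = 1`, `⟨n, φ_u⟩ = 0` and `⟨n, φ_v⟩ = 0` shows that `n_u, n_v` are
orthogonal to `n` and that `⟨n_u, φ_u⟩ = -e`, `⟨n_u, φ_v⟩ = ⟨n_v, φ_u⟩ = -f`, `⟨n_v, φ_v⟩ = -g`,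
where `e, f, g` are the inner products of `φ_uu, φ_uv, φ_vv` with `n`. Expanding in the
orthogonal frame `φ_u, φ_v, n` with `|φ_u| = |φ_v| = λ` gives `λ² n_u = -(e φ_u + f φ_v)` and
`λ² n_v = -(f φ_u + g φ_v)`. As `H = (e + g)/(2λ²)` and `μ = (e - g - 2if)/4`, the equation for
`∂_z n = (n_u - i n_v)/2` is then linear algebra over `ℂ`. -/

section PartialDerivatives

variable {F : Type} [NormedAddCommGroup F] [NormedSpace ℝ F] {f : ℝ × ℝ → F} {p : ℝ × ℝ}

lemma ContDiffAt.differentiableAt_fderiv_apply (hf : ContDiffAt ℝ 2 f p) (w : ℝ × ℝ) :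
    DifferentiableAt ℝ (fun q => fderiv ℝ f q w) p :=
  ((hf.fderiv_right (m := 1) le_rfl).differentiableAt one_ne_zero).clm_apply
    (differentiableAt_const w)

lemma ContDiffAt.differentiableAt_pu (hf : ContDiffAt ℝ 2 f p) : DifferentiableAt ℝ (pu f) p :=
  hf.differentiableAt_fderiv_apply _

lemma ContDiffAt.differentiableAt_pv (hf : ContDiffAt ℝ 2 f p) : DifferentiableAt ℝ (pv f) p :=
  hf.differentiableAt_fderiv_apply _

lemma ContDiffAt.fderiv_fderiv_apply (hf : ContDiffAt ℝ 2 f p) (v w : ℝ × ℝ) :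
    fderiv ℝ (fun q => fderiv ℝ f q w) p v = fderiv ℝ (fderiv ℝ f) p v w := by
  rw [fderiv_clm_apply ((hf.fderiv_right (m := 1) le_rfl).differentiableAt one_ne_zero)
    (differentiableAt_const w)]
  simp

lemma ContDiffAt.pu_pv_eq_pv_pu (hf : ContDiffAt ℝ 2 f p) : pu (pv f) p = pv (pu f) p := by
  change fderiv ℝ (fun q => fderiv ℝ f q (0, 1)) p (1, 0)
    = fderiv ℝ (fun q => fderiv ℝ f q (1, 0)) p (0, 1)
  rw [hf.fderiv_fderiv_apply, hf.fderiv_fderiv_apply]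
  exact hf.isSymmSndFDerivAt (by simp [minSmoothness_of_isRCLikeNormedField]) _ _

end PartialDerivatives

lemma inner_fderiv_add_inner_fderiv_eq_zero {E G : Type*} [NormedAddCommGroup E]
    [NormedSpace ℝ E] [NormedAddCommGroup G] [InnerProductSpace ℝ G] {U : Set E} {x : E}
    (hU : U ∈ nhds x) {f g : E → G} (hf : DifferentiableAt ℝ f x) (hg : DifferentiableAt ℝ g x)
    {c : ℝ} (h : ∀ y ∈ U, inner ℝ (f y) (g y) = c) (w : E) :
    inner ℝ (f x) (fderiv ℝ g x w) + inner ℝ (fderiv ℝ f x w) (g x) = 0 := by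
  have hconst : (fun y => inner ℝ (f y) (g y)) =ᶠ[nhds x] fun _ => c :=
    Filter.eventually_of_mem hU h
  rw [← fderiv_inner_apply ℝ hf hg, hconst.fderiv_eq, fderiv_const_apply,
    zero_apply]

lemma ip_eq_sum (a b : E3) : ip a b = a 0 * b 0 + a 1 * b 1 + a 2 * b 2 := by
  simp [ip, PiLp.inner_apply, Fin.sum_univ_three, mul_comm]

lemma cross_apply_zero (a b : E3) : cross a b 0 = a 1 * b 2 - a 2 * b 1 := rfl
lemma cross_apply_one (a b : E3) : cross a b 1 = a 2 * b 0 - a 0 * b 2 := rfl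
lemma cross_apply_two (a b : E3) : cross a b 2 = a 0 * b 1 - a 1 * b 0 := rfl

lemma ip_cross_left (a b : E3) : ip (cross a b) a = 0 := by
  simp only [ip_eq_sum, cross_apply_zero, cross_apply_one, cross_apply_two]; ring

lemma ip_cross_right (a b : E3) : ip (cross a b) b = 0 := by
  simp only [ip_eq_sum, cross_apply_zero, cross_apply_one, cross_apply_two]; ring

lemma norm_cross_sq (a b : E3) : ‖cross a b‖ ^ 2 = ip a a * ip b b - ip a b ^ 2 := by
  rw [← real_inner_self_eq_norm_sq, ← ip]
  simp only [ip_eq_sum, cross_apply_zero, cross_apply_one, cross_apply_two]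
  ring

lemma gram_smul_eq_expansion (a b y : E3) :
    (ip a a * ip b b - ip a b ^ 2) • y
      = ip y a • (ip b b • a - ip a b • b) + ip y b • (ip a a • b - ip a b • a)
        + ip y (cross a b) • cross a b := by
  ext j
  fin_cases j <;>
    · simp [ip_eq_sum, cross]
      ring

lemma smul_eq_of_ip_cross_eq_zero {a b y : E3} {L : ℝ} (hL : L ≠ 0) (ha : ip a a = L)
    (hb : ip b b = L) (hab : ip a b = 0) (hy : ip y (cross a b) = 0) :
    L • y = ip y a • a + ip y b • b := by
  have h := gram_smul_eq_expansion a b y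
  rw [ha, hb, hab, hy] at h
  apply smul_right_injective E3 hL
  simp only [zero_smul, add_zero, sub_zero, ne_eq, OfNat.ofNat_ne_zero, not_false_eq_true,
    zero_pow] at h
  change L • L • y = L • (ip y a • a + ip y b • b)
  rw [smul_smul, h, smul_add, smul_comm L, smul_comm L]

lemma DifferentiableAt.cross {E : Type*} [NormedAddCommGroup E] [NormedSpace ℝ E]
    {f g : E → E3} {x : E} (hf : DifferentiableAt ℝ f x) (hg : DifferentiableAt ℝ g x) :
    DifferentiableAt ℝ (fun y => cross (f y) (g y)) x := by
  rw [differentiableAt_euclidean] at hf hg ⊢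
  intro j
  fin_cases j
  · exact ((hf 1).mul (hg 2)).sub ((hf 2).mul (hg 1))
  · exact ((hf 2).mul (hg 0)).sub ((hf 0).mul (hg 2))
  · exact ((hf 0).mul (hg 1)).sub ((hf 1).mul (hg 0))

lemma ip_nvec_pu (φ : ℝ × ℝ → E3) (q : ℝ × ℝ) : ip (nvec φ q) (pu φ q) = 0 := by
  rw [nvec, ip, real_inner_smul_left, ← ip, ip_cross_left, mul_zero]

lemma ip_nvec_pv (φ : ℝ × ℝ → E3) (q : ℝ × ℝ) : ip (nvec φ q) (pv φ q) = 0 := by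
  rw [nvec, ip, real_inner_smul_left, ← ip, ip_cross_right, mul_zero]

namespace IsConfImm

variable {U : Set (ℝ × ℝ)} {φ : ℝ × ℝ → E3} {lam : ℝ × ℝ → ℝ} {p : ℝ × ℝ}

lemma contDiffAt (h : IsConfImm U φ lam) (hp : p ∈ U) : ContDiffAt ℝ 2 φ p :=
  (h.2.1.contDiffAt (h.1.mem_nhds hp)).of_le (WithTop.coe_le_coe.2 le_top)

lemma lam_pos (h : IsConfImm U φ lam) (hp : p ∈ U) : 0 < lam p :=
  (h.2.2.2 p hp).1

lemma sq_lam_ne_zero (h : IsConfImm U φ lam) (hp : p ∈ U) : lam p ^ 2 ≠ 0 :=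
  pow_ne_zero 2 (h.lam_pos hp).ne'

lemma norm_cross (h : IsConfImm U φ lam) (hp : p ∈ U) :
    ‖cross (pu φ p) (pv φ p)‖ = lam p ^ 2 := by
  obtain ⟨-, huu, hvv, huv⟩ := h.2.2.2 p hp
  rw [← sq_eq_sq₀ (norm_nonneg _) (sq_nonneg _), norm_cross_sq, huu, hvv, huv]
  ring

lemma cross_eq_smul_nvec (h : IsConfImm U φ lam) (hp : p ∈ U) :
    cross (pu φ p) (pv φ p) = lam p ^ 2 • nvec φ p := by
  rw [nvec, h.norm_cross hp, smul_smul, mul_inv_cancel₀ (h.sq_lam_ne_zero hp), one_smul]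

lemma ip_nvec_self (h : IsConfImm U φ lam) (hp : p ∈ U) : ip (nvec φ p) (nvec φ p) = 1 := by
  rw [ip, real_inner_self_eq_norm_sq, nvec, norm_smul, h.norm_cross hp, norm_inv,
    Real.norm_of_nonneg (sq_nonneg _), inv_mul_cancel₀ (h.sq_lam_ne_zero hp), one_pow]

lemma differentiableAt_nvec (h : IsConfImm U φ lam) (hp : p ∈ U) :
    DifferentiableAt ℝ (nvec φ) p := by
  have hcross := (h.contDiffAt hp).differentiableAt_pu.cross (h.contDiffAt hp).differentiableAt_pv
  have hnorm : ‖cross (pu φ p) (pv φ p)‖ ≠ 0 := by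
    rw [h.norm_cross hp]; exact h.sq_lam_ne_zero hp
  exact ((hcross.norm ℝ (norm_ne_zero_iff.1 hnorm)).inv hnorm).smul hcross

lemma smul_fderiv_nvec (h : IsConfImm U φ lam) (hp : p ∈ U) (w : ℝ × ℝ) :
    lam p ^ 2 • fderiv ℝ (nvec φ) p w
      = -(ip (fderiv ℝ (pu φ) p w) (nvec φ p) • pu φ p
          + ip (fderiv ℝ (pv φ) p w) (nvec φ p) • pv φ p) := by
  have hU := h.1.mem_nhds hp
  have hn := h.differentiableAt_nvec hp
  have hn_n := inner_fderiv_add_inner_fderiv_eq_zero hU hn hn (fun q hq => h.ip_nvec_self hq) w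
  have hn_u := inner_fderiv_add_inner_fderiv_eq_zero hU hn (h.contDiffAt hp).differentiableAt_pu
    (fun q _ => ip_nvec_pu φ q) w
  have hn_v := inner_fderiv_add_inner_fderiv_eq_zero hU hn (h.contDiffAt hp).differentiableAt_pv
    (fun q _ => ip_nvec_pv φ q) w
  rw [real_inner_comm] at hn_n hn_u hn_v
  have hcross : ip (fderiv ℝ (nvec φ) p w) (cross (pu φ p) (pv φ p)) = 0 := by
    rw [← two_mul, mul_eq_zero, or_iff_right two_ne_zero] at hn_n
    rw [h.cross_eq_smul_nvec hp, ip, real_inner_smul_right, hn_n, mul_zero]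
  obtain ⟨-, huu, hvv, huv⟩ := h.2.2.2 p hp
  rw [smul_eq_of_ip_cross_eq_zero (h.sq_lam_ne_zero hp) huu hvv huv hcross, ip, ip,
    eq_neg_of_add_eq_zero_right hn_u, eq_neg_of_add_eq_zero_right hn_v]
  simp only [ip, neg_smul, neg_add]

end IsConfImm

def toCLM : E3 →L[ℝ] (Fin 3 → ℂ) :=
  ContinuousLinearMap.pi fun j => ofRealCLM.comp (EuclideanSpace.proj j)

lemma cdot_eq_dotProduct (a b : Fin 3 → ℂ) : cdot a b = a ⬝ᵥ b := rfl

lemma toC_dotProduct_toC (x y : E3) : toC x ⬝ᵥ toC y = (ip x y : ℂ) := by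
  simp [dotProduct, toC, ip_eq_sum, Fin.sum_univ_three]

lemma fderiv_phiz_apply {f : ℝ × ℝ → E3} {p : ℝ × ℝ} (hu : DifferentiableAt ℝ (pu f) p)
    (hv : DifferentiableAt ℝ (pv f) p) (w : ℝ × ℝ) :
    fderiv ℝ (phiz f) p w
      = (2 : ℂ)⁻¹ • (toC (fderiv ℝ (pu f) p w) - I • toC (fderiv ℝ (pv f) p w)) := by
  have hderiv : HasFDerivAt (phiz f) ((2 : ℂ)⁻¹ • (toCLM.comp (fderiv ℝ (pu f) p)
      - I • toCLM.comp (fderiv ℝ (pv f) p))) p := ((toCLM.hasFDerivAt.comp p hu.hasFDerivAt).sub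
    ((toCLM.hasFDerivAt.comp p hv.hasFDerivAt).const_smul I)).const_smul (2 : ℂ)⁻¹
  rw [hderiv.fderiv]
  rfl

lemma mcurv_eq (φ : ℝ × ℝ → E3) (lam : ℝ × ℝ → ℝ) (p : ℝ × ℝ) :
    mcurv φ lam p
      = (ip (pu (pu φ) p) (nvec φ p) + ip (pv (pv φ) p) (nvec φ p)) / (2 * lam p ^ 2) := by
  rw [mcurv, lap, ip, inner_add_left]
  rfl

lemma muQ_eq {φ : ℝ × ℝ → E3} {p : ℝ × ℝ} (hφ : ContDiffAt ℝ 2 φ p) :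
    muQ φ p = ((ip (pu (pu φ) p) (nvec φ p) : ℂ) - ip (pv (pv φ) p) (nvec φ p)
      - 2 * I * ip (pu (pv φ) p) (nvec φ p)) / 4 := by
  have hpu : pu (phiz φ) p = (2 : ℂ)⁻¹ • (toC (pu (pu φ) p) - I • toC (pu (pv φ) p)) :=
    fderiv_phiz_apply hφ.differentiableAt_pu hφ.differentiableAt_pv (1, 0)
  have hpv : pv (phiz φ) p = (2 : ℂ)⁻¹ • (toC (pv (pu φ) p) - I • toC (pv (pv φ) p)) :=
    fderiv_phiz_apply hφ.differentiableAt_pu hφ.differentiableAt_pv (0, 1)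
  rw [muQ, dz, hpu, hpv, ← hφ.pu_pv_eq_pv_pu, cdot_eq_dotProduct]
  simp only [smul_dotProduct, sub_dotProduct, toC_dotProduct_toC, smul_eq_mul]
  linear_combination (ip (pv (pv φ) p) (nvec φ p) : ℂ) / 4 * I_sq

lemma phiz_eq_of_smul_pu_smul_pv {N f : ℝ × ℝ → E3} {p : ℝ × ℝ} {ℓ e m g : ℝ} (hℓ : ℓ ≠ 0)
    (hu : ℓ ^ 2 • pu N p = -(e • pu f p + m • pv f p))
    (hv : ℓ ^ 2 • pv N p = -(m • pu f p + g • pv f p)) :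
    phiz N p = (-(((e + g) / (2 * ℓ ^ 2) : ℝ) : ℂ)) • phiz f p
      - (2 * ((e - g - 2 * I * m) / 4) / (ℓ : ℂ) ^ 2) • phizbar f p := by
  funext j
  have hu_j := congrArg (fun v : E3 => (v j : ℂ)) hu
  have hv_j := congrArg (fun v : E3 => (v j : ℂ)) hv
  simp only [PiLp.smul_apply, PiLp.neg_apply, PiLp.add_apply, smul_eq_mul] at hu_j hv_j
  push_cast at hu_j hv_j
  have hℓC : (ℓ : ℂ) ≠ 0 := ofReal_ne_zero.2 hℓ
  simp only [phiz, phizbar, toC, Pi.smul_apply, Pi.sub_apply, Pi.add_apply, smul_eq_mul]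
  push_cast
  field_simp
  linear_combination 8 * hu_j - 8 * I * hv_j - 8 * m * (pv f p j : ℂ) * I_sq

/-- Weingarten / third structure equation:
∂_z n = −H φ_z − (2μ/λ²) φ_z̄. -/
theorem conformal_weingarten_equation
    (U : Set (ℝ × ℝ)) (φ : ℝ × ℝ → E3) (lam : ℝ × ℝ → ℝ)
    (h : IsConfImm U φ lam) :
    ∀ p ∈ U,
      phiz (nvec φ) p
        = (-(mcurv φ lam p : ℂ)) • phiz φ p
          - (2 * muQ φ p / (lam p : ℂ) ^ 2) • phizbar φ p := by
  intro p hp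
  have hφ := h.contDiffAt hp
  rw [mcurv_eq, muQ_eq hφ]
  refine phiz_eq_of_smul_pu_smul_pv (h.lam_pos hp).ne' (h.smul_fderiv_nvec hp (1, 0)) ?_
  rw [hφ.pu_pv_eq_pv_pu]
  exact h.smul_fderiv_nvec hp (0, 1)
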